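/- arXiv:1201.3299 — 2 statements merged into one kernel-verified Lean document; each statement's English description precedes it below -/
import Mathlib

section
/- Let a < b be positive integers with b ≠ 2a, X = {a, b, a+b}, and G the associated Grundy sequence. If n is the least pile with G(n) = k, then G(n + a + b) = k. -/
/-!
Every value `k` is attained, since `k` is reachable from any pile that exceeds the positions of
all smaller values by more than `max X`. For the first pile `n` with value `k`, the pile
`n + a + b` can reach every value below `k` (shift each move from `n` by `a + b`), but not `k`
itself: a move to a later occurrence `m > n` of `k` would leave `n` reachable from `m`, because
`X` is symmetric under `u ↦ a + b - u`.
-/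

/-- The minimum excludant of a set of naturals. -/
noncomputable def mex (S : Set ℕ) : ℕ := sInf {m | m ∉ S}

/-- `G` is the Grundy (nim) sequence of the all-but subtraction game with
excluded set `X`: `G n = mex { G (n - t) : t > 0, t ∉ X, t ≤ n }`. -/
def IsGrundy (X : Set ℕ) (G : ℕ → ℕ) : Prop :=
  ∀ n, G n = mex {m | ∃ t, 0 < t ∧ t ∉ X ∧ t ≤ n ∧ G (n - t) = m}

theorem mex_notMem {S : Set ℕ} (hS : Sᶜ.Nonempty) : mex S ∉ S :=
  Nat.sInf_mem hS

theorem mem_of_lt_mex {S : Set ℕ} {j : ℕ} (hj : j < mex S) : j ∈ S := by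
  by_contra h
  exact Nat.notMem_of_lt_sInf hj h

theorem mex_eq_of_forall_lt_mem {S : Set ℕ} {k : ℕ} (hk : k ∉ S) (h : ∀ j < k, j ∈ S) :
    mex S = k :=
  le_antisymm (Nat.sInf_le hk) <| not_lt.mp fun hlt =>
    Nat.sInf_mem (⟨k, hk⟩ : {m | m ∉ S}.Nonempty) (h _ hlt)

def moveValues (X : Set ℕ) (G : ℕ → ℕ) (n : ℕ) : Set ℕ :=
  {m | ∃ t, 0 < t ∧ t ∉ X ∧ t ≤ n ∧ G (n - t) = m}

theorem moveValues_finite (X : Set ℕ) (G : ℕ → ℕ) (n : ℕ) : (moveValues X G n).Finite :=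
  ((Set.finite_Iic n).image G).subset fun _ ⟨t, _, _, _, h⟩ => ⟨n - t, Nat.sub_le n t, h⟩

variable {X : Set ℕ} {G : ℕ → ℕ}

theorem IsGrundy.notMem_moveValues (hG : IsGrundy X G) (n : ℕ) : G n ∉ moveValues X G n := by
  rw [hG n]
  exact mex_notMem (moveValues_finite X G n).infinite_compl.nonempty

theorem IsGrundy.mem_moveValues_of_lt (hG : IsGrundy X G) {n j : ℕ} (hj : j < G n) :
    j ∈ moveValues X G n :=
  mem_of_lt_mex (hG n ▸ hj)

theorem IsGrundy.exists_le_apply_eq_of_le (hG : IsGrundy X G) {k N : ℕ} (hk : k ≤ G N) :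
    ∃ m ≤ N, G m = k := by
  rcases hk.eq_or_lt with rfl | hlt
  · exact ⟨N, le_rfl, rfl⟩
  · obtain ⟨t, -, -, -, hm⟩ := hG.mem_moveValues_of_lt hlt
    exact ⟨N - t, Nat.sub_le N t, hm⟩

theorem IsGrundy.exists_le_apply (hG : IsGrundy X G) (hX : BddAbove X) (k : ℕ) :
    ∃ N, k ≤ G N := by
  obtain ⟨c, hc⟩ := hX
  induction k with
  | zero => exact ⟨0, Nat.zero_le _⟩
  | succ k ih =>
    obtain ⟨N, hN⟩ := ih
    refine ⟨N + c + 1, Nat.succ_le_of_lt <| not_le.mp fun hle =>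
      hG.notMem_moveValues (N + c + 1) ?_⟩
    obtain ⟨m, hmN, hm⟩ := hG.exists_le_apply_eq_of_le (hle.trans hN)
    refine ⟨N + c + 1 - m, by omega, fun ht => ?_, by omega, ?_⟩
    · have := hc ht
      omega
    · rwa [Nat.sub_sub_self (by omega)]

theorem IsGrundy.exists_apply_eq (hG : IsGrundy X G) (hX : BddAbove X) (k : ℕ) :
    ∃ n, G n = k := by
  obtain ⟨N, hN⟩ := hG.exists_le_apply hX k
  obtain ⟨m, -, hm⟩ := hG.exists_le_apply_eq_of_le hN
  exact ⟨m, hm⟩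

theorem IsGrundy.apply_add_eq_of_forall_lt_ne (hG : IsGrundy X G) {s : ℕ} (hs : IsGreatest X s)
    (hsymm : ∀ u ∈ X, u < s → s - u ∈ X) {n : ℕ} (hfirst : ∀ m < n, G m ≠ G n) :
    G (n + s) = G n := by
  rw [hG (n + s)]
  refine mex_eq_of_forall_lt_mem ?_ fun j hj => ?_
  · rintro ⟨t, ht0, htX, hts, hm⟩
    have hnm : n < n + s - t := by
      rcases lt_trichotomy (n + s - t) n with hlt | heq | hgt
      · exact absurd hm (hfirst _ hlt)
      · exact absurd (show t = s by omega ▸ hs.1) htX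
      · exact hgt
    have huX : n + s - t - n ∉ X := fun hu =>
      htX (by simpa [show s - (n + s - t - n) = t by omega] using hsymm _ hu (by omega))
    refine hG.notMem_moveValues (n + s - t) ⟨n + s - t - n, by omega, huX, by omega, ?_⟩
    rw [Nat.sub_sub_self hnm.le, hm]
  · obtain ⟨t, ht0, -, htn, hm⟩ := hG.mem_moveValues_of_lt hj
    refine ⟨t + s, by omega, fun hX => ?_, by omega, ?_⟩
    · have := hs.2 hX
      omega
    · rwa [show n + s - (t + s) = n - t by omega]

theorem stmt_17_general (a b : ℕ)
    (G : ℕ → ℕ) (hG : IsGrundy {a, b, a + b} G) (k n : ℕ)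
    (hn : n = sInf {i | G i = k}) :
    G (n + a + b) = k := by
  have hk : {i | G i = k}.Nonempty := hG.exists_apply_eq (Set.toFinite _).bddAbove k
  have hGn : G n = k := hn ▸ Nat.sInf_mem hk
  have hfirst : ∀ m < n, G m ≠ G n := by
    rintro m hm hGm
    exact Nat.notMem_of_lt_sInf (s := {i | G i = k}) (hn ▸ hm) (hGm.trans hGn)
  have hs : IsGreatest {a, b, a + b} (a + b) := ⟨by simp, by simp⟩
  have hsymm : ∀ u ∈ ({a, b, a + b} : Set ℕ), u < a + b →
      a + b - u ∈ ({a, b, a + b} : Set ℕ) := by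
    simp only [Set.mem_insert_iff, Set.mem_singleton_iff]
    omega
  rw [add_assoc, hG.apply_add_eq_of_forall_lt_ne hs hsymm hfirst, hGn]

theorem stmt_17 (a b : ℕ) (ha : 0 < a) (hab : a < b) (hb : b ≠ 2 * a)
    (G : ℕ → ℕ) (hG : IsGrundy {a, b, a + b} G) (k n : ℕ)
    (hn : n = sInf {i | G i = k}) :
    G (n + a + b) = k :=
  stmt_17_general a b G hG k n hn
end

section
/- For the all-but subtraction game with excluded set X = {a, 2a} (a a positive integer), the Grundy sequence satisfies G(n + 3a) = G(n) + a for all n ∈ ℕ. -/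
lemma mex_eq_of (S : Set ℕ) (k : ℕ) (h1 : k ∉ S) (h2 : ∀ m < k, m ∈ S) : mex S = k := by
  unfold mex
  have hk : k ∈ {m | m ∉ S} := h1
  refine le_antisymm (Nat.sInf_le hk) ?_
  by_contra h
  push_neg at h
  have hmem : sInf {m | m ∉ S} ∈ {m | m ∉ S} := Nat.sInf_mem ⟨k, hk⟩
  exact hmem (h2 _ h)

/-- The closed form of the Grundy function. -/
def gf (a n : ℕ) : ℕ := a * (n / (3 * a)) + n % a

lemma gf_nonmem (a : ℕ) (ha : 0 < a) (n t : ℕ) (ht0 : 0 < t) (hta : t ≠ a)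
    (ht2a : t ≠ 2 * a) (htn : t ≤ n) : gf a (n - t) ≠ gf a n := by
  intro heq
  unfold gf at heq
  set q := n / (3 * a) with hq
  set r := n % (3 * a) with hr
  have h3a : 0 < 3 * a := by omega
  have hn : n = 3 * (a * q) + r := by
    have h := Nat.div_add_mod n (3 * a)
    rw [← hq, ← hr] at h
    have h' : 3 * a * q = 3 * (a * q) := by ring
    omega
  have hrlt : r < 3 * a := Nat.mod_lt _ h3a
  have hra : r % a = n % a := by
    conv_rhs => rw [hn]
    rw [show 3 * (a * q) + r = a * (3 * q) + r by ring, Nat.mul_add_mod]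
  clear_value q r
  by_cases hcase : t ≤ r
  · -- same block
    have hsub : n - t = 3 * (a * q) + (r - t) := by omega
    have hdiv : (n - t) / (3 * a) = q := by
      rw [show n - t = 3 * a * q + (r - t) by rw [hsub]; ring,
        Nat.mul_add_div h3a, Nat.div_eq_of_lt (by omega)]
      omega
    rw [hdiv] at heq
    have hmod : (n - t) % a = n % a := by omega
    -- then a ∣ t
    have hdvd : a ∣ t := by
      have h2 : n - t + t = n := by omega
      have h3 : (n - t) ≡ n [MOD a] := hmod
      have h4 : (n - t) + t ≡ (n - t) + 0 [MOD a] := by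
        rw [h2, Nat.add_zero]; exact h3.symm
      exact (Nat.modEq_zero_iff_dvd).mp (Nat.ModEq.add_left_cancel' _ h4)
    obtain ⟨k, hk⟩ := hdvd
    have hk3 : k < 3 := by
      have h1 : a * k < a * 3 := by rw [← hk]; omega
      exact Nat.lt_of_mul_lt_mul_left h1
    have hk1 : 1 ≤ k := by
      rcases Nat.eq_zero_or_pos k with h | h
      · subst h; rw [Nat.mul_zero] at hk; omega
      · exact h
    interval_cases k
    · exact hta (by omega)
    · exact ht2a (by omega)
  · -- earlier block
    have hlt : n - t < 3 * (a * q) := by omega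
    have hdivlt : (n - t) / (3 * a) < q := by
      rw [Nat.div_lt_iff_lt_mul h3a]
      have h' : q * (3 * a) = 3 * (a * q) := by ring
      omega
    have hma : (n - t) % a < a := Nat.mod_lt _ ha
    have h1 : a * ((n - t) / (3 * a)) + a = a * ((n - t) / (3 * a) + 1) := by ring
    have h2 : a * ((n - t) / (3 * a) + 1) ≤ a * q :=
      Nat.mul_le_mul_left a (by omega)
    omega

lemma gf_mem (a : ℕ) (ha : 0 < a) (n m : ℕ) (hm : m < gf a n) :
    ∃ t, 0 < t ∧ t ≠ a ∧ t ≠ 2 * a ∧ t ≤ n ∧ gf a (n - t) = m := by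
  unfold gf at hm
  set q := n / (3 * a) with hq
  set r := n % (3 * a) with hr
  have h3a : 0 < 3 * a := by omega
  have hn : n = 3 * (a * q) + r := by
    have h := Nat.div_add_mod n (3 * a)
    rw [← hq, ← hr] at h
    have h' : 3 * a * q = 3 * (a * q) := by ring
    omega
  have hrlt : r < 3 * a := Nat.mod_lt _ h3a
  have hra : r % a = n % a := by
    conv_rhs => rw [hn]
    rw [show 3 * (a * q) + r = a * (3 * q) + r by ring, Nat.mul_add_mod]
  clear_value q r
  have hnaa : n % a < a := Nat.mod_lt _ ha
  have hnar : n % a ≤ r := by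
    have := Nat.mod_le r a; omega
  by_cases hcase : a * q ≤ m
  · -- same block: t = n % a - s where s = m - a*q
    set s := m - a * q with hs
    have hslt : s < n % a := by omega
    refine ⟨n % a - s, by omega, by omega, by omega, by omega, ?_⟩
    set t := n % a - s with htdef
    have htr : t ≤ r := by omega
    have hsub : n - t = 3 * (a * q) + (r - t) := by omega
    have hdiv : (n - t) / (3 * a) = q := by
      rw [show n - t = 3 * a * q + (r - t) by rw [hsub]; ring,
        Nat.mul_add_div h3a, Nat.div_eq_of_lt (by omega)]
      omega
    have hmod : (n - t) % a = s := by
      have hrd := Nat.div_add_mod r a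
      have hrt : r - t = a * (r / a) + s := by omega
      rw [show n - t = a * (3 * q + r / a) + s by rw [hsub, hrt]; ring,
        Nat.mul_add_mod, Nat.mod_eq_of_lt (by omega)]
    unfold gf
    rw [hdiv, hmod]
    omega
  · -- earlier block: t = n - (3*(a*q') + s)
    push_neg at hcase
    set q' := m / a with hq'
    set s := m % a with hs
    have hsa : s < a := Nat.mod_lt _ ha
    have hm0 : m = a * q' + s := by
      have h := Nat.div_add_mod m a
      rw [← hq', ← hs] at h
      omega
    clear_value q' s
    have hq'q : q' < q := by
      have h2 : a * q' < a * q := by omega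
      exact Nat.lt_of_mul_lt_mul_left h2
    have hmul : 3 * a * (q' + 1) ≤ 3 * a * q := Nat.mul_le_mul_left _ (by omega)
    have e1 : 3 * a * (q' + 1) = 3 * (a * q') + 3 * a := by ring
    have e2 : 3 * a * q = 3 * (a * q) := by ring
    have hb : 3 * (a * q') + s + 2 * a < n := by omega
    refine ⟨n - (3 * (a * q') + s), by omega, by omega, by omega, by omega, ?_⟩
    have hsub : n - (n - (3 * (a * q') + s)) = 3 * (a * q') + s := by omega
    rw [hsub]
    unfold gf
    have hdiv : (3 * (a * q') + s) / (3 * a) = q' := by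
      rw [show 3 * (a * q') + s = 3 * a * q' + s by ring,
        Nat.mul_add_div h3a, Nat.div_eq_of_lt (by omega)]
      omega
    have hmod : (3 * (a * q') + s) % a = s := by
      rw [show 3 * (a * q') + s = a * (3 * q') + s by ring, Nat.mul_add_mod,
        Nat.mod_eq_of_lt hsa]
    rw [hdiv, hmod]
    omega

theorem stmt_18 (a : ℕ) (ha : 0 < a)
    (G : ℕ → ℕ) (hG : IsGrundy {a, 2 * a} G) :
    ∀ n, G (n + 3 * a) = G n + a := by
  have key : ∀ n, G n = gf a n := by
    intro n
    induction n using Nat.strong_induction_on with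
    | _ n ih =>
      rw [hG n]
      have hset : {m | ∃ t, 0 < t ∧ t ∉ ({a, 2 * a} : Set ℕ) ∧ t ≤ n ∧ G (n - t) = m}
          = {m | ∃ t, 0 < t ∧ t ≠ a ∧ t ≠ 2 * a ∧ t ≤ n ∧ gf a (n - t) = m} := by
        ext m
        simp only [Set.mem_setOf_eq, Set.mem_insert_iff, Set.mem_singleton_iff, not_or]
        constructor
        · rintro ⟨t, ht0, ⟨hta, ht2a⟩, htn, hGm⟩
          exact ⟨t, ht0, hta, ht2a, htn, by rw [← ih (n - t) (by omega)]; exact hGm⟩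
        · rintro ⟨t, ht0, hta, ht2a, htn, hGm⟩
          exact ⟨t, ht0, ⟨hta, ht2a⟩, htn, by rw [ih (n - t) (by omega)]; exact hGm⟩
      rw [hset]
      apply mex_eq_of
      · rintro ⟨t, ht0, hta, ht2a, htn, hGm⟩
        exact gf_nonmem a ha n t ht0 hta ht2a htn hGm
      · intro m hm
        exact gf_mem a ha n m hm
  intro n
  rw [key, key n]
  unfold gf
  have h3a : 0 < 3 * a := by omega
  have hdiv : (n + 3 * a) / (3 * a) = n / (3 * a) + 1 := Nat.add_div_right n h3a
  have hmod : (n + 3 * a) % a = n % a := by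
    rw [show n + 3 * a = n + a * 3 by ring, Nat.add_mul_mod_self_left]
  rw [hdiv, hmod]
  ring
end
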